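/- arXiv:1909.03628 — 3 statements merged into one kernel-verified Lean document; each statement's English description precedes it below -/
import Mathlib

section
/- Let p be an odd prime and k ≤ n positive integers. If n/gcd(n,k) is even, then gcd(p^k + 1, p^n - 1) = p^{gcd(k,n)} + 1. -/
/-! Write `d = gcd k n`. Since `k / d` and `n / d` are coprime and `n / d` is even, `k / d` is odd,
so `p ^ d + 1 ∣ p ^ k + 1`, and `p ^ d + 1 ∣ p ^ (2 * d) - 1 ∣ p ^ n - 1`. Conversely the gcd `g`
divides `p ^ (2 * k) - 1` and `p ^ (2 * n) - 1`, hence `p ^ (2 * d) - 1`; modulo the latter,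
`p ^ k ≡ p ^ d` because `k` is an odd multiple of `d`, so `g ∣ p ^ k + 1` gives `g ∣ p ^ d + 1`. -/

namespace Nat

theorem two_mul_gcd_dvd_of_even_div_gcd {k n : ℕ} (h : Even (n / gcd n k)) :
    2 * gcd k n ∣ n := by
  rw [gcd_comm, mul_comm]
  exact mul_dvd_of_dvd_div (gcd_dvd_left n k) (even_iff_two_dvd.mp h)

theorem odd_div_gcd_of_even_div_gcd {k n : ℕ} (hk : 0 < k) (h : Even (n / gcd n k)) :
    Odd (k / gcd k n) := by
  have hcop : Coprime (k / gcd k n) (n / gcd k n) :=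
    coprime_div_gcd_div_gcd (gcd_pos_of_pos_left n hk)
  rw [gcd_comm n k] at h
  exact (hcop.coprime_dvd_right (even_iff_two_dvd.mp h)).odd_of_right

theorem pow_add_one_dvd_pow_two_mul_sub_one (x m : ℕ) : x ^ m + 1 ∣ x ^ (2 * m) - 1 := by
  rw [mul_comm, pow_mul, ← one_pow 2, Nat.sq_sub_sq]
  exact dvd_mul_right _ _

theorem pow_modEq_pow_of_odd_div {x d k : ℕ} (hx : 0 < x) (hdk : d ∣ k) (hodd : Odd (k / d)) :
    x ^ k ≡ x ^ d [MOD x ^ (2 * d) - 1] := by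
  obtain ⟨j, hj⟩ := hodd
  have hk : k = 2 * d * j + d := by rw [← Nat.mul_div_cancel' hdk, hj]; ring
  have hsq : x ^ (2 * d) ≡ 1 [MOD x ^ (2 * d) - 1] := modEq_sub (one_le_pow _ _ hx)
  calc x ^ k = (x ^ (2 * d)) ^ j * x ^ d := by rw [hk, pow_add, pow_mul]
    _ ≡ 1 ^ j * x ^ d [MOD x ^ (2 * d) - 1] := (hsq.pow j).mul_right _
    _ = x ^ d := by rw [one_pow, one_mul]

theorem pow_gcd_add_one_dvd_gcd {x k n : ℕ} (hn : 2 * gcd k n ∣ n) (hk : Odd (k / gcd k n)) :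
    x ^ gcd k n + 1 ∣ gcd (x ^ k + 1) (x ^ n - 1) := by
  have hk' : x ^ gcd k n + 1 ∣ x ^ k + 1 := by
    simpa [← pow_mul, Nat.mul_div_cancel' (gcd_dvd_left k n)] using
      hk.nat_add_dvd_pow_add_pow (x ^ gcd k n) 1
  exact dvd_gcd hk' ((pow_add_one_dvd_pow_two_mul_sub_one x _).trans
    (pow_sub_one_dvd_pow_sub_one x hn))

theorem gcd_dvd_pow_gcd_add_one {x k n : ℕ} (hx : 0 < x) (hk : Odd (k / gcd k n)) :
    gcd (x ^ k + 1) (x ^ n - 1) ∣ x ^ gcd k n + 1 := by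
  set g := gcd (x ^ k + 1) (x ^ n - 1)
  have hgk : g ∣ x ^ k + 1 := gcd_dvd_left _ _
  have hg2d : g ∣ x ^ (2 * gcd k n) - 1 := by
    rw [← gcd_mul_left, ← pow_sub_one_gcd_pow_sub_one]
    exact dvd_gcd (hgk.trans (pow_add_one_dvd_pow_two_mul_sub_one x k))
      ((gcd_dvd_right _ _).trans (pow_sub_one_dvd_pow_sub_one x (dvd_mul_left n 2)))
  have hmod : x ^ k + 1 ≡ x ^ gcd k n + 1 [MOD g] :=
    ((pow_modEq_pow_of_odd_div hx (gcd_dvd_left k n) hk).of_dvd hg2d).add_right 1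
  exact modEq_zero_iff_dvd.mp (hmod.symm.trans (modEq_zero_iff_dvd.mpr hgk))

end Nat

theorem stmt_6_general (p k n : ℕ) (hp : p.Prime)
    (hk : 0 < k) (h : Even (n / Nat.gcd n k)) :
    Nat.gcd (p ^ k + 1) (p ^ n - 1) = p ^ Nat.gcd k n + 1 :=
  have hodd := Nat.odd_div_gcd_of_even_div_gcd hk h
  Nat.dvd_antisymm (Nat.gcd_dvd_pow_gcd_add_one hp.pos hodd)
    (Nat.pow_gcd_add_one_dvd_gcd (Nat.two_mul_gcd_dvd_of_even_div_gcd h) hodd)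

theorem stmt_6 (p k n : ℕ) (hp : p.Prime) (hodd : Odd p)
    (hk : 0 < k) (hkn : k ≤ n) (h : Even (n / Nat.gcd n k)) :
    Nat.gcd (p ^ k + 1) (p ^ n - 1) = p ^ Nat.gcd k n + 1 :=
  stmt_6_general p k n hp hk h
end

section
/- Let n be a positive integer, c ∈ F_{2^n} with c ≠ 0, 1, and assume Tr(1/c) = 0 or Tr(c) = 0. Then the c-differential uniformity of F(x) = x^{2^n-2} is 3: every equation F(x+a) + c·F(x) = b has at most 3 solutions, and some equation has exactly 3 solutions. -/
/-- The absolute trace map from a field of characteristic 2 of degree `n` over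
its prime field, computed as `x ↦ ∑_{i<n} x^(2^i)` (its values lie in `𝔽₂ ⊆ K`). -/
def absTr2 (n : ℕ) {K : Type*} [Field K] (x : K) : K :=
  ∑ i ∈ Finset.range n, x ^ (2 ^ i)

lemma absTr2_add {n : ℕ} {K : Type*} [Field K] [CharP K 2] (x y : K) :
    absTr2 n (x + y) = absTr2 n x + absTr2 n y := by
  unfold absTr2
  rw [← Finset.sum_add_distrib]
  haveI : Fact (Nat.Prime 2) := ⟨Nat.prime_two⟩
  exact Finset.sum_congr rfl fun i _ => add_pow_char_pow x y 2 i

lemma absTr2_sq {n : ℕ} {K : Type*} [Field K] [Fintype K]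
    (hK : Fintype.card K = 2 ^ n) (x : K) : absTr2 n (x ^ 2) = absTr2 n x := by
  have hxc : x ^ 2 ^ n = x := by rw [← hK]; exact FiniteField.pow_card x
  have h1 : ∑ i ∈ Finset.range (n + 1), x ^ 2 ^ i
      = absTr2 n x + x ^ 2 ^ n := by rw [Finset.sum_range_succ]; rfl
  have h2 : ∑ i ∈ Finset.range (n + 1), x ^ 2 ^ i
      = absTr2 n (x ^ 2) + x ^ 2 ^ 0 := by
    rw [Finset.sum_range_succ']
    congr 1
    unfold absTr2
    exact Finset.sum_congr rfl fun i _ => by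
      rw [← pow_mul, ← pow_succ']
  have h3 := h1.symm.trans h2
  rw [hxc, pow_zero, pow_one] at h3
  exact (add_right_cancel h3).symm

lemma artinSchreier {n : ℕ} (hn : 0 < n) {K : Type*} [Field K] [Fintype K]
    [DecidableEq K] [CharP K 2] (hK : Fintype.card K = 2 ^ n)
    (d : K) (hd : absTr2 n d = 0) : ∃ y : K, y ^ 2 + y = d := by
  classical
  have h2 : (2 : K) = 0 := CharTwo.two_eq_zero
  have h10 : (1 : K) ≠ 0 := one_ne_zero
  set φ : K → K := fun y => y ^ 2 + y with hφ
  set A : Finset K := Finset.image φ Finset.univ with hA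
  set B : Finset K := Finset.univ.filter (fun x => absTr2 n x = 0) with hB
  -- Tr vanishes on image of φ
  have hAB : A ⊆ B := by
    intro z hz
    rw [hA, Finset.mem_image] at hz
    obtain ⟨y, _, rfl⟩ := hz
    rw [hB, Finset.mem_filter]
    refine ⟨Finset.mem_univ _, ?_⟩
    rw [hφ]
    simp only
    rw [absTr2_add, absTr2_sq hK]
    exact CharTwo.add_self_eq_zero _
  -- each fiber of φ has exactly 2 elements
  have hfiber : ∀ z ∈ A, (Finset.univ.filter (fun y => φ y = z)).card = 2 := by
    intro z hz
    rw [hA, Finset.mem_image] at hz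
    obtain ⟨y, _, rfl⟩ := hz
    have : Finset.univ.filter (fun y' => φ y' = φ y) = {y, y + 1} := by
      ext y'
      simp only [Finset.mem_filter, Finset.mem_univ, true_and, Finset.mem_insert,
        Finset.mem_singleton]
      constructor
      · intro h
        simp only [hφ] at h
        have key : (y' + y) * (y' + y + 1) = 0 := by
          linear_combination h + (y ^ 2 + y + y' * y) * h2
        rcases mul_eq_zero.mp key with h0 | h0
        · left; linear_combination h0 - y * h2
        · right; linear_combination h0 - (y + 1) * h2
      · rintro (rfl | rfl)
        · rfl
        · simp only [hφ]; linear_combination (y + 1) * h2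
    rw [this, Finset.card_insert_of_notMem, Finset.card_singleton]
    simp only [Finset.mem_singleton]
    intro h
    have h1 : (1:K) = 0 := by linear_combination -h
    exact h10 h1
  -- card A = 2^(n-1)
  have hcardA : A.card * 2 = 2 ^ n := by
    have := Finset.card_eq_sum_card_image φ (Finset.univ : Finset K)
    rw [Finset.card_univ, hK] at this
    rw [Finset.sum_congr rfl hfiber, Finset.sum_const, smul_eq_mul] at this
    exact this.symm
  -- card B ≤ 2^(n-1)
  have hcardB : B.card ≤ 2 ^ (n - 1) := by
    set T : Polynomial K := ∑ i ∈ Finset.range n, Polynomial.X ^ (2 ^ i) with hT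
    have hTne : T ≠ 0 := by
      intro h
      have hc : T.coeff 1 = 1 := by
        rw [hT, Polynomial.finset_sum_coeff]
        rw [Finset.sum_eq_single 0]
        · simp
        · intro i _ hi
          rw [Polynomial.coeff_X_pow]
          have h21 : (1:ℕ) < 2 ^ i := Nat.one_lt_pow hi one_lt_two
          simp [Nat.ne_of_lt h21]
        · intro h0; exact absurd (Finset.mem_range.mpr hn) h0
      rw [h] at hc; simp at hc
    have hTdeg : T.natDegree ≤ 2 ^ (n - 1) := by
      apply Polynomial.natDegree_sum_le_of_forall_le
      intro i hi
      rw [Polynomial.natDegree_X_pow]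
      exact Nat.pow_le_pow_right (by norm_num) (Nat.le_sub_one_of_lt (Finset.mem_range.mp hi))
    have hBsub : B ⊆ T.roots.toFinset := by
      intro x hx
      rw [hB, Finset.mem_filter] at hx
      rw [Multiset.mem_toFinset, Polynomial.mem_roots hTne, hT,
        Polynomial.IsRoot, Polynomial.eval_finset_sum]
      simpa [absTr2] using hx.2
    calc B.card ≤ T.roots.toFinset.card := Finset.card_le_card hBsub
      _ ≤ Multiset.card T.roots := T.roots.toFinset_card_le
      _ ≤ T.natDegree := T.card_roots'
      _ ≤ 2 ^ (n - 1) := hTdeg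
  have hApow : A.card = 2 ^ (n - 1) := by
    have : 2 ^ n = 2 ^ (n - 1) * 2 := by
      rw [← pow_succ, Nat.sub_add_cancel hn]
    omega
  have hBA : A = B := Finset.eq_of_subset_of_card_le hAB (hcardB.trans hApow.ge)
  have hdB : d ∈ B := by rw [hB, Finset.mem_filter]; exact ⟨Finset.mem_univ _, hd⟩
  rw [← hBA, hA, Finset.mem_image] at hdB
  obtain ⟨y, _, hy⟩ := hdB
  exact ⟨y, hy⟩

lemma ncard_triple_le {K : Type*} (x y z : K) : ({x, y, z} : Set K).ncard ≤ 3 := by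
  have h1 := Set.ncard_insert_le x ({y, z} : Set K)
  have h2 := Set.ncard_insert_le y ({z} : Set K)
  have h3 : ({z} : Set K).ncard = 1 := Set.ncard_singleton z
  omega

theorem stmt_16 {n : ℕ} (hn : 0 < n)
    {K : Type*} [Field K] [Fintype K] (hK : Fintype.card K = 2 ^ n)
    (c : K) (hc0 : c ≠ 0) (hc1 : c ≠ 1)
    (htr : absTr2 n c⁻¹ = 0 ∨ absTr2 n c = 0)
    (F : K → K) (hF : ∀ x, F x = x ^ (2 ^ n - 2)) :
    (∀ a b : K, Nat.card {x : K // F (x + a) + c * F x = b} ≤ 3) ∧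
      (∃ a b : K, Nat.card {x : K // F (x + a) + c * F x = b} = 3) := by
  classical
  haveI hchar : CharP K 2 := by
    obtain ⟨m, hp, hcard⟩ := FiniteField.card K (ringChar K)
    have h2 : ringChar K = 2 := by
      have hd : ringChar K ∣ 2 ^ n := by
        rw [← hK, hcard]; exact dvd_pow_self _ (by positivity)
      rcases (Nat.Prime.dvd_of_dvd_pow hp hd) with h
      exact (Nat.prime_dvd_prime_iff_eq hp Nat.prime_two).mp h
    rw [← h2]; exact ringChar.charP K
  have h2 : (2 : K) = 0 := CharTwo.two_eq_zero
  have hn2 : 2 ≤ n := by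
    by_contra h
    have hn1 : n = 1 := by omega
    have := FiniteField.pow_card_sub_one_eq_one c hc0
    rw [hK, hn1] at this
    norm_num at this
    exact hc1 this
  have h2n : 4 ≤ 2 ^ n := by
    calc 4 = 2 ^ 2 := by norm_num
    _ ≤ 2 ^ n := Nat.pow_le_pow_right (by norm_num) hn2
  have hFi : ∀ x : K, F x = x⁻¹ := by
    intro x
    rw [hF]
    by_cases hx : x = 0
    · subst hx
      rw [zero_pow (by omega : 2 ^ n - 2 ≠ 0), inv_zero]
    · have h1 : x ^ (2 ^ n - 1) = 1 := by
        rw [← hK]; exact FiniteField.pow_card_sub_one_eq_one x hx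
      have hmul : x ^ (2 ^ n - 2) * x = 1 := by
        rw [← pow_succ]
        have he : 2 ^ n - 2 + 1 = 2 ^ n - 1 := by omega
        rw [he]; exact h1
      exact eq_inv_of_mul_eq_one_left hmul
  have h1c : (1 : K) + c ≠ 0 := by
    intro h; exact hc1 (by linear_combination h - h2)
  constructor
  · -- upper bound
    intro a b
    have hcard : Nat.card {x : K // F (x + a) + c * F x = b}
        = ({x : K | F (x + a) + c * F x = b} : Set K).ncard :=
      Nat.card_coe_set_eq _
    rw [hcard]
    by_cases ha : a = 0
    · subst ha
      have hsub : {x : K | F (x + 0) + c * F x = b} ⊆ ({0, (1 + c) / b, 0} : Set K) := by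
        intro x hx
        simp only [Set.mem_setOf_eq, add_zero, hFi] at hx
        simp only [Set.mem_insert_iff, Set.mem_singleton_iff]
        by_cases hx0 : x = 0
        · exact Or.inl hx0
        · have hb : 1 + c = b * x := by
            field_simp at hx; linear_combination hx
          have hbne : b ≠ 0 := by
            intro h; rw [h, zero_mul] at hb; exact h1c hb
          right; left
          field_simp
          linear_combination -hb
      exact le_trans (Set.ncard_le_ncard hsub (Set.toFinite _)) (ncard_triple_le _ _ _)
    · by_cases hb : b = 0
      · subst hb
        have hsub : {x : K | F (x + a) + c * F x = 0}
            ⊆ ({0, a, c * a / (1 + c)} : Set K) := by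
          intro x hx
          simp only [Set.mem_setOf_eq, hFi] at hx
          simp only [Set.mem_insert_iff, Set.mem_singleton_iff]
          by_cases hx0 : x = 0
          · exact Or.inl hx0
          by_cases hxa : x = a
          · exact Or.inr (Or.inl hxa)
          · have hxa' : x + a ≠ 0 := fun h => hxa (by linear_combination h - a * h2)
            have key : x + c * (x + a) = 0 := by
              have e1 : (x + a)⁻¹ * (x + a) = 1 := inv_mul_cancel₀ hxa'
              have e2 : x⁻¹ * x = 1 := inv_mul_cancel₀ hx0
              calc x + c * (x + a) = ((x + a)⁻¹ + c * x⁻¹) * (x * (x + a)) := by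
                    linear_combination (-x) * e1 + (-(c * (x + a))) * e2
              _ = 0 := by rw [hx]; ring
            right; right
            field_simp
            linear_combination key - c * a * h2
        exact le_trans (Set.ncard_le_ncard hsub (Set.toFinite _)) (ncard_triple_le _ _ _)
      · set p := (1 + c + a * b) / b with hp
        set q := c * a / b with hq
        set r := if h : ∃ z : K, z ^ 2 + p * z + q = 0 then h.choose else 0 with hrdef
        set sp := if b = a⁻¹ then (0 : K) else a with hsp
        have hsub : {x : K | F (x + a) + c * F x = b} ⊆ ({sp, r, r + p} : Set K) := by
          intro x hx
          simp only [Set.mem_setOf_eq, hFi] at hx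
          simp only [Set.mem_insert_iff, Set.mem_singleton_iff]
          by_cases hx0 : x = 0
          · subst hx0
            rw [zero_add, inv_zero, mul_zero, add_zero] at hx
            left
            rw [hsp, if_pos hx.symm]
          by_cases hxa : x = a
          · rw [hxa, CharTwo.add_self_eq_zero, inv_zero, zero_add] at hx
            have hba : b ≠ a⁻¹ := by
              intro h
              rw [h] at hx
              exact hc1 (mul_right_cancel₀ (inv_ne_zero ha) (hx.trans (one_mul a⁻¹).symm))
            rw [hxa]
            left
            rw [hsp, if_neg hba]
          · have hxa' : x + a ≠ 0 := fun h => hxa (by linear_combination h - a * h2)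
            have key : x + c * (x + a) = b * (x * (x + a)) := by
              have e1 : (x + a)⁻¹ * (x + a) = 1 := inv_mul_cancel₀ hxa'
              have e2 : x⁻¹ * x = 1 := inv_mul_cancel₀ hx0
              calc x + c * (x + a) = ((x + a)⁻¹ + c * x⁻¹) * (x * (x + a)) := by
                    linear_combination (-x) * e1 + (-(c * (x + a))) * e2
              _ = b * (x * (x + a)) := by rw [hx]
            have hQx : x ^ 2 + p * x + q = 0 := by
              rw [hp, hq]
              field_simp
              linear_combination -key + (x + c * x + c * a) * h2
            have hex : ∃ z : K, z ^ 2 + p * z + q = 0 := ⟨x, hQx⟩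
            have hr : r ^ 2 + p * r + q = 0 := by
              rw [hrdef, dif_pos hex]; exact hex.choose_spec
            have hfact : (x + r) * (x + r + p) = 0 := by
              linear_combination hQx + hr + (x * r - q) * h2
            rcases mul_eq_zero.mp hfact with h0 | h0
            · exact Or.inr (Or.inl (by linear_combination h0 - r * h2))
            · exact Or.inr (Or.inr (by linear_combination h0 - (r + p) * h2))
        exact le_trans (Set.ncard_le_ncard hsub (Set.toFinite _)) (ncard_triple_le _ _ _)
  · -- existence of exactly 3
    rcases htr with htr | htr
    · -- Tr c⁻¹ = 0 : use a = 1, b = 1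
      obtain ⟨y, hy⟩ := artinSchreier hn hK c⁻¹ htr
      have hy2 : c * (y ^ 2 + y) = 1 := by rw [hy]; exact mul_inv_cancel₀ hc0
      set r := c * y with hrdef
      have hr : r ^ 2 + c * r + c = 0 := by
        rw [hrdef]; linear_combination c * hy2 + c * h2
      have hr2 : (r + c) ^ 2 + c * (r + c) + c = 0 := by
        linear_combination hr + (r * c + c ^ 2) * h2
      have root_ne0 : ∀ z : K, z ^ 2 + c * z + c = 0 → z ≠ 0 := by
        intro z hz h; apply hc0; rw [h] at hz; linear_combination hz
      have root_ne1 : ∀ z : K, z ^ 2 + c * z + c = 0 → z + 1 ≠ 0 := by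
        intro z hz h
        have hz1 : z = 1 := by linear_combination h - h2
        rw [hz1] at hz
        exact one_ne_zero (α := K) (by linear_combination hz - c * h2)
      refine ⟨1, 1, ?_⟩
      have hmem : ∀ z : K, z ^ 2 + c * z + c = 0 → (z + 1)⁻¹ + c * z⁻¹ = 1 := by
        intro z hz
        have hz0 := root_ne0 z hz
        have hz1 := root_ne1 z hz
        field_simp
        linear_combination -hz + (z ^ 2 + c * z + z) * h2 + (-z - z ^ 2 + c) * h2
      have hseteq : {x : K | F (x + 1) + c * F x = 1} = {0, r, r + c} := by
        ext x
        simp only [Set.mem_setOf_eq, hFi, Set.mem_insert_iff, Set.mem_singleton_iff]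
        constructor
        · intro hx
          by_cases hx0 : x = 0
          · exact Or.inl hx0
          by_cases hx1 : x + 1 = 0
          · exfalso
            have hx1' : x = 1 := by linear_combination hx1 - h2
            rw [hx1, hx1', inv_zero, zero_add, inv_one, mul_one] at hx
            exact hc1 hx
          · have e1 : (x + 1)⁻¹ * (x + 1) = 1 := inv_mul_cancel₀ hx1
            have e2 : x⁻¹ * x = 1 := inv_mul_cancel₀ hx0
            have key : x + c * (x + 1) = x * (x + 1) := by
              calc x + c * (x + 1) = ((x + 1)⁻¹ + c * x⁻¹) * (x * (x + 1)) := by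
                    linear_combination (-x) * e1 + (-(c * (x + 1))) * e2
              _ = x * (x + 1) := by rw [hx]; ring
            have hQx : x ^ 2 + c * x + c = 0 := by
              linear_combination -key + (x + c * x + c) * h2 - x * h2
            have hfact : (x + r) * (x + r + c) = 0 := by
              linear_combination hQx + hr + (x * r - c) * h2
            rcases mul_eq_zero.mp hfact with h0 | h0
            · exact Or.inr (Or.inl (by linear_combination h0 - r * h2))
            · exact Or.inr (Or.inr (by linear_combination h0 - (r + c) * h2))
        · rintro (rfl | rfl | rfl)
          · rw [zero_add, inv_one, inv_zero, mul_zero, add_zero]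
          · exact hmem r hr
          · exact hmem (r + c) hr2
      have hd1 : r ≠ 0 := root_ne0 r hr
      have hd2 : r + c ≠ 0 := root_ne0 (r + c) hr2
      have hd3 : r ≠ r + c := fun h => hc0 (by linear_combination -h)
      have hcard : Nat.card {x : K // F (x + 1) + c * F x = 1}
          = ({x : K | F (x + 1) + c * F x = 1} : Set K).ncard :=
        Nat.card_coe_set_eq _
      rw [hcard, hseteq]
      rw [Set.ncard_insert_of_notMem (by simp [Ne.symm hd1, Ne.symm hd2]) (Set.toFinite _),
        Set.ncard_pair hd3]
    · -- Tr c = 0 : use a = 1, b = c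
      obtain ⟨y, hy⟩ := artinSchreier hn hK (c ^ 2) (by rw [absTr2_sq hK]; exact htr)
      have hci : c * c⁻¹ = 1 := mul_inv_cancel₀ hc0
      have hy2 : c⁻¹ * c⁻¹ * (y ^ 2 + y) = 1 := by
        rw [hy]; field_simp
      set r := c⁻¹ * y with hrdef
      have hr : r ^ 2 + c⁻¹ * r + 1 = 0 := by
        rw [hrdef]; linear_combination hy2 + h2
      have hr2 : (r + c⁻¹) ^ 2 + c⁻¹ * (r + c⁻¹) + 1 = 0 := by
        linear_combination hr + (r * c⁻¹ + c⁻¹ ^ 2) * h2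
      have hcinv : c⁻¹ ≠ 0 := inv_ne_zero hc0
      have root_ne0 : ∀ z : K, z ^ 2 + c⁻¹ * z + 1 = 0 → z ≠ 0 := by
        intro z hz h; rw [h] at hz
        exact one_ne_zero (α := K) (by linear_combination hz)
      have root_ne1 : ∀ z : K, z ^ 2 + c⁻¹ * z + 1 = 0 → z + 1 ≠ 0 := by
        intro z hz h
        have hz1 : z = 1 := by linear_combination h - h2
        rw [hz1] at hz
        exact hcinv (by linear_combination hz - h2)
      refine ⟨1, c, ?_⟩
      have hmem : ∀ z : K, z ^ 2 + c⁻¹ * z + 1 = 0 → (z + 1)⁻¹ + c * z⁻¹ = c := by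
        intro z hz
        have hz0 := root_ne0 z hz
        have hz1 := root_ne1 z hz
        field_simp
        linear_combination -c * hz + (z + c * z + c) * h2 + (z ^ 2 + z) * hci - z * c * h2 - z ^ 2 * hci
      have hseteq : {x : K | F (x + 1) + c * F x = c} = {1, r, r + c⁻¹} := by
        ext x
        simp only [Set.mem_setOf_eq, hFi, Set.mem_insert_iff, Set.mem_singleton_iff]
        constructor
        · intro hx
          by_cases hx0 : x = 0
          · exfalso
            rw [hx0, zero_add, inv_one, inv_zero, mul_zero, add_zero] at hx
            exact hc1 hx.symm
          by_cases hx1 : x + 1 = 0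
          · exact Or.inl (by linear_combination hx1 - h2)
          · have e1 : (x + 1)⁻¹ * (x + 1) = 1 := inv_mul_cancel₀ hx1
            have e2 : x⁻¹ * x = 1 := inv_mul_cancel₀ hx0
            have key : x + c * (x + 1) = c * (x * (x + 1)) := by
              calc x + c * (x + 1) = ((x + 1)⁻¹ + c * x⁻¹) * (x * (x + 1)) := by
                    linear_combination (-x) * e1 + (-(c * (x + 1))) * e2
              _ = c * (x * (x + 1)) := by rw [hx]
            have hQx : x ^ 2 + c⁻¹ * x + 1 = 0 := by
              have hQ : c * x ^ 2 + x + c = 0 := by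
                linear_combination -key + (x + c * x + c) * h2 - c * x * h2
              linear_combination c⁻¹ * hQ - (x ^ 2 + 1) * hci
            have hfact : (x + r) * (x + r + c⁻¹) = 0 := by
              linear_combination hQx + hr + (x * r - 1) * h2
            rcases mul_eq_zero.mp hfact with h0 | h0
            · exact Or.inr (Or.inl (by linear_combination h0 - r * h2))
            · exact Or.inr (Or.inr (by linear_combination h0 - (r + c⁻¹) * h2))
        · rintro (rfl | rfl | rfl)
          · rw [CharTwo.add_self_eq_zero, inv_zero, inv_one, mul_one, zero_add]
          · exact hmem r hr
          · exact hmem (r + c⁻¹) hr2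
      have hd1 : r ≠ 1 := fun h => root_ne1 r hr (by rw [h]; linear_combination h2)
      have hd2 : r + c⁻¹ ≠ 1 := fun h => root_ne1 _ hr2 (by rw [h]; linear_combination h2)
      have hd3 : r ≠ r + c⁻¹ := fun h => hcinv (by linear_combination -h)
      have hcard : Nat.card {x : K // F (x + 1) + c * F x = c}
          = ({x : K | F (x + 1) + c * F x = c} : Set K).ncard :=
        Nat.card_coe_set_eq _
      rw [hcard, hseteq]
      rw [Set.ncard_insert_of_notMem (by simp [Ne.symm hd1, Ne.symm hd2]) (Set.toFinite _),
        Set.ncard_pair hd3]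
end

section
/- Let p be an odd prime, n ≥ 1, c ∈ F_{p^n} with c ≠ 0, 1, 4, 4^{-1}, and suppose c² - 4c is a square in F_{p^n} or 1 - 4c is a square in F_{p^n}. Then the c-differential uniformity of F(x) = x^{p^n-2} is 3. -/
/-!
On a field of odd order `q`, `x ^ (q - 2) = x⁻¹` (with `0⁻¹ = 0`); write `S_c(a, b)` for the
solution set of `(x + a)⁻¹ - c x⁻¹ = b`. Away from `x = 0` and `x = -a` the equation is the
quadratic `b x² + (ab + c - 1) x + ca = 0`, which is not the zero polynomial when `c ≠ 1`, so it
contributes at most two solutions; and for `c ≠ 1` at most one of `0, -a` is a solution, since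
they require `b = a⁻¹` and `b = c a⁻¹` respectively. Hence `|S_c(a, b)| ≤ 3`. For `a = 1` the
quadratic never vanishes at `0` or `-1` (its values there are `c` and `1`), so a `b` for which
one of `0, -1` is a solution and the quadratic has a nonzero square discriminant has exactly three
solutions. The choices `b = 1` (solution `0`, discriminant `c² - 4c`) and `b = c` (solution `-1`,
discriminant `1 - 4c`) do this.
-/

open Finset

namespace FiniteField

variable {K : Type*} [Field K] [Fintype K]

theorem two_ne_zero_of_odd_card (h : Odd (Fintype.card K)) : (2 : K) ≠ 0 :=
  Ring.two_ne_zero fun h2 => by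
    rw [even_card_iff_char_two, Nat.odd_iff.mp h] at h2
    exact one_ne_zero h2

theorem pow_card_sub_two_eq_inv (h : 2 < Fintype.card K) (x : K) :
    x ^ (Fintype.card K - 2) = x⁻¹ := by
  rcases eq_or_ne x 0 with rfl | hx
  · rw [zero_pow (by omega), inv_zero]
  · refine eq_inv_of_mul_eq_one_left ?_
    rw [← pow_succ, show Fintype.card K - 2 + 1 = Fintype.card K - 1 by omega]
    exact pow_card_sub_one_eq_one x hx

end FiniteField

section Quadratic

variable {K : Type*} [Field K] [Fintype K] [DecidableEq K]

open Polynomial in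
theorem card_quadratic_roots_le_two {u v w : K} (h : u ≠ 0 ∨ v ≠ 0) :
    #{x | u * (x * x) + v * x + w = 0} ≤ 2 := by
  set P : K[X] := C u * X ^ 2 + C v * X + C w
  have hP : P ≠ 0 := by
    intro hP
    have h2 := congrArg (coeff · 2) hP
    have h1 := congrArg (coeff · 1) hP
    simp only [P, coeff_add, coeff_C_mul_X_pow, coeff_C_mul_X, coeff_C, coeff_zero] at h1 h2
    norm_num at h1 h2
    tauto
  calc #{x | u * (x * x) + v * x + w = 0}
      ≤ #P.roots.toFinset := by
        refine card_le_card fun x hx => ?_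
        rw [Multiset.mem_toFinset, mem_roots hP, IsRoot, ← (mem_filter_univ x).mp hx]
        simp [P, sq]
    _ ≤ P.natDegree := (Multiset.toFinset_card_le _).trans (card_roots' P)
    _ ≤ 2 := natDegree_quadratic_le

theorem card_quadratic_roots_eq_two [NeZero (2 : K)] {u v w s : K} (hu : u ≠ 0)
    (hs : discrim u v w = s * s) (hs0 : s ≠ 0) :
    #{x | u * (x * x) + v * x + w = 0} = 2 := by
  have hroots : ({x | u * (x * x) + v * x + w = 0} : Finset K) =
      {(-v + s) / (2 * u), (-v - s) / (2 * u)} := by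
    ext x
    simp [quadratic_eq_zero_iff hu hs]
  rw [hroots, card_pair]
  rw [Ne, div_left_inj' (mul_ne_zero two_ne_zero hu)]
  intro h
  have h2s : 2 * s = 0 := by linear_combination h
  exact hs0 ((mul_eq_zero.mp h2s).resolve_left two_ne_zero)

end Quadratic

section InverseDerivative

variable {K : Type*} [Field K]

theorem inv_add_sub_mul_inv_eq_iff {a b c x : K} (hx : x ≠ 0) (hxa : x + a ≠ 0) :
    (x + a)⁻¹ - c * x⁻¹ = b ↔ b * (x * x) + (a * b + c - 1) * x + c * a = 0 := by
  have key : (x + a)⁻¹ - c * x⁻¹ - b =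
      -(b * (x * x) + (a * b + c - 1) * x + c * a) / (x * (x + a)) := by
    field_simp
    ring
  rw [← sub_eq_zero, key, div_eq_zero_iff, neg_eq_zero, or_iff_left (mul_ne_zero hx hxa)]

variable [Fintype K] [DecidableEq K]

def invCDiffSet (c a b : K) : Finset K := {x | (x + a)⁻¹ - c * x⁻¹ = b}

theorem zero_mem_invCDiffSet_iff {c a b : K} : 0 ∈ invCDiffSet c a b ↔ a⁻¹ = b := by
  simp [invCDiffSet]

theorem neg_mem_invCDiffSet_iff {c a b : K} : -a ∈ invCDiffSet c a b ↔ c * a⁻¹ = b := by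
  simp [invCDiffSet]

theorem card_invCDiffSet_inter_le_one {c : K} (hc : c ≠ 1) (a b : K) :
    #(invCDiffSet c a b ∩ {0, -a}) ≤ 1 := by
  rcases eq_or_ne a 0 with rfl | ha
  · simpa using card_le_card (inter_subset_right (s₁ := invCDiffSet c 0 b) (s₂ := {0}))
  by_contra! h
  have hsub : {0, -a} ⊆ invCDiffSet c a b :=
    eq_of_subset_of_card_le inter_subset_right (card_le_two.trans h) ▸ inter_subset_left
  have h0 := zero_mem_invCDiffSet_iff.mp (hsub (by simp))
  have ha' := neg_mem_invCDiffSet_iff.mp (hsub (by simp))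
  exact hc (mul_right_cancel₀ (inv_ne_zero ha) (by rw [ha', one_mul, h0]))

theorem invCDiffSet_sdiff (c a b : K) :
    invCDiffSet c a b \ {0, -a} =
      ({x | b * (x * x) + (a * b + c - 1) * x + c * a = 0} : Finset K) \ {0, -a} := by
  ext x
  simp only [mem_sdiff, invCDiffSet, mem_filter_univ, mem_insert, mem_singleton, not_or]
  exact and_congr_left fun ⟨hx, hxa⟩ =>
    inv_add_sub_mul_inv_eq_iff hx fun h => hxa (eq_neg_of_add_eq_zero_left h)

theorem card_invCDiffSet_le_three {c : K} (hc : c ≠ 1) (a b : K) : #(invCDiffSet c a b) ≤ 3 := by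
  have hquad : b ≠ 0 ∨ a * b + c - 1 ≠ 0 := by
    by_contra! h
    exact hc (by linear_combination h.2 - a * h.1)
  calc #(invCDiffSet c a b)
      = #(invCDiffSet c a b ∩ {0, -a}) + #(invCDiffSet c a b \ {0, -a}) :=
        (card_inter_add_card_sdiff _ _).symm
    _ ≤ 1 + #{x | b * (x * x) + (a * b + c - 1) * x + c * a = 0} := by
        rw [invCDiffSet_sdiff]
        exact add_le_add (card_invCDiffSet_inter_le_one hc a b) (card_le_card sdiff_subset)
    _ ≤ 3 := by
        have := card_quadratic_roots_le_two (w := c * a) hquad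
        omega

theorem card_invCDiffSet_one_eq_three [NeZero (2 : K)] {c b s x₀ : K} (hc0 : c ≠ 0) (hc1 : c ≠ 1)
    (hx₀ : x₀ ∈ ({0, -1} : Finset K)) (hsol : x₀ ∈ invCDiffSet c 1 b) (hb : b ≠ 0)
    (hs : discrim b (b + c - 1) c = s * s) (hs0 : s ≠ 0) : #(invCDiffSet c 1 b) = 3 := by
  have hinter : #(invCDiffSet c 1 b ∩ {0, -1}) = 1 :=
    le_antisymm (card_invCDiffSet_inter_le_one hc1 1 b)
      (card_pos.mpr ⟨x₀, mem_inter.mpr ⟨hsol, hx₀⟩⟩)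
  have hdisj : Disjoint ({x | b * (x * x) + (b + c - 1) * x + c = 0} : Finset K) {0, -1} := by
    rw [disjoint_right]
    intro x hx
    rcases mem_insert.mp hx with rfl | hx
    · simpa using hc0
    · rw [mem_singleton.mp hx, mem_filter_univ]
      ring_nf
      exact one_ne_zero
  rw [← card_inter_add_card_sdiff _ {0, -1}, hinter, invCDiffSet_sdiff]
  simp only [one_mul, mul_one]
  rw [hdisj.sdiff_eq_left, card_quadratic_roots_eq_two hb hs hs0]

end InverseDerivative

theorem stmt_18_general {p n : ℕ} (hodd : Odd p)
    {K : Type*} [Field K] [Fintype K] (hK : Fintype.card K = p ^ n)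
    (c : K) (hc0 : c ≠ 0) (hc1 : c ≠ 1) (hc4 : c ≠ 4) (hc4' : c ≠ 4⁻¹)
    (hsq : IsSquare (c ^ 2 - 4 * c) ∨ IsSquare (1 - 4 * c))
    (F : K → K) (hF : ∀ x, F x = x ^ (p ^ n - 2)) :
    (∀ a b : K, Nat.card {x : K // F (x + a) - c * F x = b} ≤ 3) ∧
      (∃ a b : K, Nat.card {x : K // F (x + a) - c * F x = b} = 3) := by
  classical
  have hq : Odd (Fintype.card K) := hK ▸ hodd.pow
  have : NeZero (2 : K) := ⟨FiniteField.two_ne_zero_of_odd_card hq⟩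
  have hFinv (x : K) : F x = x⁻¹ := by
    rw [hF, ← hK, FiniteField.pow_card_sub_two_eq_inv]
    obtain ⟨k, hk⟩ := hq
    have := Fintype.one_lt_card (α := K)
    omega
  have hcard (a b : K) : Nat.card {x : K // F (x + a) - c * F x = b} = #(invCDiffSet c a b) := by
    simp only [hFinv, invCDiffSet, Nat.card_eq_fintype_card, Fintype.card_subtype]
  simp only [hcard]
  refine ⟨card_invCDiffSet_le_three hc1, ?_⟩
  rcases hsq with ⟨s, hs⟩ | ⟨s, hs⟩
  · refine ⟨1, 1, card_invCDiffSet_one_eq_three (x₀ := 0) (s := s) hc0 hc1 (by simp)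
      (zero_mem_invCDiffSet_iff.mpr inv_one) one_ne_zero
      (by rw [discrim]; linear_combination hs) ?_⟩
    rintro rfl
    exact (mul_ne_zero hc0 (sub_ne_zero.mpr hc4)) (by linear_combination hs)
  · refine ⟨1, c, card_invCDiffSet_one_eq_three (x₀ := -1) (s := s) hc0 hc1 (by simp)
      (neg_mem_invCDiffSet_iff.mpr (by rw [inv_one, mul_one])) hc0
      (by rw [discrim]; linear_combination hs) ?_⟩
    rintro rfl
    exact hc4' (eq_inv_of_mul_eq_one_left (by linear_combination -hs))

theorem stmt_18 {p n : ℕ} (hp : p.Prime) (hodd : Odd p) (hn : 0 < n)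
    {K : Type*} [Field K] [Fintype K] (hK : Fintype.card K = p ^ n)
    (c : K) (hc0 : c ≠ 0) (hc1 : c ≠ 1) (hc4 : c ≠ 4) (hc4' : c ≠ 4⁻¹)
    (hsq : IsSquare (c ^ 2 - 4 * c) ∨ IsSquare (1 - 4 * c))
    (F : K → K) (hF : ∀ x, F x = x ^ (p ^ n - 2)) :
    (∀ a b : K, Nat.card {x : K // F (x + a) - c * F x = b} ≤ 3) ∧
      (∃ a b : K, Nat.card {x : K // F (x + a) - c * F x = b} = 3) :=
  stmt_18_general hodd hK c hc0 hc1 hc4 hc4' hsq F hF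
end
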